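/- Fix an integer q ≥ 1 and a polynomial ring S = K[x_1,...,x_m] with m ≥ 2 over a field K. Let I = ⟨x_i^{q+1}, x_j^{q+1}⟩ for some i ≠ j. Then for all n ≥ 1, v(I^n) − v(\overline{I^n}) = q; in particular the difference between the v-number of powers and of integral closures of powers of an equigenerated complete intersection monomial ideal can be any prescribed nonnegative integer, independent of n. -/

import Mathlib

open MvPolynomial Ideal

/-- The integral closure of an ideal. -/
noncomputable def intClosure {R : Type*} [CommRing R] (I : Ideal R) : Ideal R :=
  Ideal.span {x : R | ∃ n : ℕ, 0 < n ∧ ∃ c : ℕ → R,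
    (∀ i ∈ Finset.Icc 1 n, c i ∈ I ^ i) ∧
    x ^ n + ∑ i ∈ Finset.Icc 1 n, c i * x ^ (n - i) = 0}

/-- The v-number of a homogeneous ideal `J`. -/
noncomputable def vnumber {K : Type*} [Field K] {σ : Type*}
    (J : Ideal (MvPolynomial σ K)) : ℕ :=
  sInf {d : ℕ | ∃ f : MvPolynomial σ K, f.IsHomogeneous d ∧
    Submodule.colon J (Ideal.span {f}) ∈
      associatedPrimes (MvPolynomial σ K) (MvPolynomial σ K ⧸ J)}

/-!
Write `a = q + 1` and `P = (x_i, x_j)`. A polynomial lies in `(x_i^a, x_j^a)^n` iff each of its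
monomials `x^μ` admits `s + t = n` with `a s ≤ μ_i`, `a t ≤ μ_j`, and it lies in `P^b` iff each
monomial has `μ_i + μ_j ≥ b`, i.e. iff its weighted order for the weight counting `x_i, x_j` is at
least `b`. That order is additive on products, so `P` is prime and an integral equation for `z`
over `P^b` forces the order of `z` to be at least `b`: the integral closure of `(x_i^a, x_j^a)^n`
is `P^{na}`. For `J = (x_i^a, x_j^a)^n` (and so also for `P^{na}`, the case `a = 1`), a prime
`(J : f)` contains `x_i` and `x_j` but not `1`, so some monomial `x^μ` of `f` lies outside `J`
while `x_i x^μ, x_j x^μ ∈ J`; this forces `μ_i + μ_j = (n + 1) a - 2`, and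
`f = x_i^{a-1} x_j^{na-1}` attains the bound with `(J : f) = P`. Hence `v(I^n) = (n + 1) a - 2` and `v(closure(I^n)) = na - 1`.
-/

namespace Finsupp

variable {σ : Type*} {i j : σ}

theorem single_add_single_le_iff (hij : i ≠ j) {x y : ℕ} {μ : σ →₀ ℕ} :
    single i x + single j y ≤ μ ↔ x ≤ μ i ∧ y ≤ μ j := by
  classical
  simp only [le_def, add_apply, single_apply]
  refine ⟨fun h => by simpa [hij, hij.symm] using And.intro (h i) (h j), ?_⟩
  rintro ⟨hi, hj⟩ k
  by_cases hki : i = k <;> by_cases hkj : j = k <;> simp_all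

theorem apply_add_apply_le_degree (hij : i ≠ j) (μ : σ →₀ ℕ) : μ i + μ j ≤ μ.degree := by
  simpa using degree_mono ((single_add_single_le_iff hij).2 ⟨le_rfl, le_rfl⟩)

theorem weight_piSingle_add_piSingle [DecidableEq σ] (i j : σ) (μ : σ →₀ ℕ) :
    weight (Pi.single i 1 + Pi.single j 1) μ = μ i + μ j := by
  rw [weight_apply]
  simp only [Pi.add_apply, smul_add]
  rw [sum_add, ← weight_apply, ← weight_apply, weight_single_one_apply, weight_single_one_apply]

end Finsupp

namespace Ideal

section CommSemiring

variable {R : Type*} [CommSemiring R]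

theorem span_pair_pow (x y : R) (n : ℕ) :
    span {x, y} ^ n = span {z | ∃ s t, s + t = n ∧ z = x ^ s * y ^ t} := by
  induction n with
  | zero => simp [← span_singleton_one]
  | succ n ih =>
    rw [pow_succ, ih, span_mul_span']
    congr 1
    ext z
    simp only [Set.mem_mul, Set.mem_ofPred_eq, Set.mem_insert_iff, Set.mem_singleton_iff]
    constructor
    · rintro ⟨_, ⟨s, t, hst, rfl⟩, _, rfl | rfl, rfl⟩
      · exact ⟨s + 1, t, by omega, by ring⟩
      · exact ⟨s, t + 1, by omega, by ring⟩
    · rintro ⟨s, t, hst, rfl⟩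
      rcases s with _ | s
      · exact ⟨_, ⟨0, t - 1, by omega, rfl⟩, y, Or.inr rfl, by
          rw [mul_assoc, ← pow_succ, Nat.sub_add_cancel (by omega)]⟩
      · exact ⟨_, ⟨s, t, by omega, rfl⟩, x, Or.inl rfl, by ring⟩

variable {J : Ideal R} {f : R}

theorem notMem_of_isPrime_colon (h : (Submodule.colon J (span {f})).IsPrime) : f ∉ J :=
  fun hf => h.ne_top ((eq_top_iff_one _).2 (mem_colon_span_singleton.2 (by rwa [one_mul])))

theorem mul_mem_of_isPrime_colon_of_pow_mem (h : (Submodule.colon J (span {f})).IsPrime) {r : R}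
    {N : ℕ} (hr : r ^ N ∈ J) : r * f ∈ J :=
  mem_colon_span_singleton.1 <|
    h.mem_of_pow_mem N (mem_colon_span_singleton.2 (J.mul_mem_right f hr))

end CommSemiring

theorem colon_span_singleton_mem_associatedPrimes {R : Type*} [CommRing R] {J : Ideal R} {f : R}
    (h : (Submodule.colon J (span {f})).IsPrime) :
    Submodule.colon J (span {f}) ∈ associatedPrimes R (R ⧸ J) := by
  have hann : (⊥ : Submodule R (R ⧸ J)).colon {Quotient.mk J f} = Submodule.colon J (span {f}) := by
    ext r
    rw [Submodule.mem_colon_singleton, Submodule.mem_bot, mem_colon_span_singleton,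
      Algebra.smul_def, Quotient.algebraMap_eq, ← map_mul, Quotient.eq_zero_iff_mem]
  exact ⟨h, Quotient.mk J f, by rw [hann, h.radical]⟩

end Ideal

theorem mem_intClosure_of_pow_mem_pow {R : Type*} [CommRing R] {J : Ideal R} {z : R} {N : ℕ}
    (hN : 0 < N) (hz : z ^ N ∈ J ^ N) : z ∈ intClosure J := by
  refine subset_span ⟨N, hN, Pi.single N (-z ^ N), fun k hk => ?_, ?_⟩
  · rcases eq_or_ne k N with rfl | hkN
    · simpa using hz
    · simp [hkN]
  · rw [Finset.sum_eq_single_of_mem N (Finset.mem_Icc.2 ⟨hN, le_rfl⟩)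
      fun k _ hkN => by simp [hkN]]
    simp

theorem vnumber_eq_of_isPrime_colon {K σ : Type*} [Field K] {J : Ideal (MvPolynomial σ K)} {d : ℕ}
    {f : MvPolynomial σ K} (hf : f.IsHomogeneous d) (hfJ : (Submodule.colon J (span {f})).IsPrime)
    (hmin : ∀ d' (g : MvPolynomial σ K), g.IsHomogeneous d' →
      (Submodule.colon J (span {g})).IsPrime → d ≤ d') :
    vnumber J = d :=
  le_antisymm (Nat.sInf_le ⟨f, hf, colon_span_singleton_mem_associatedPrimes hfJ⟩)
    (le_csInf ⟨d, f, hf, colon_span_singleton_mem_associatedPrimes hfJ⟩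
      fun d' ⟨g, hg, hgJ⟩ => hmin d' g hg hgJ.isPrime)

namespace MvPowerSeries

variable {σ R : Type*} (w : σ → ℕ)

theorem weightedOrder_pow [Semiring R] [IsDomain R] (f : MvPowerSeries σ R) (N : ℕ) :
    (f ^ N).weightedOrder w = N • f.weightedOrder w := by
  induction N with
  | zero => simp
  | succ N ih => rw [pow_succ, weightedOrder_mul, ih, succ_nsmul]

theorem le_weightedOrder_sum [Semiring R] {ι : Type*} {s : Finset ι}
    {f : ι → MvPowerSeries σ R} {n : ℕ∞} (h : ∀ k ∈ s, n ≤ (f k).weightedOrder w) :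
    n ≤ (∑ k ∈ s, f k).weightedOrder w :=
  le_weightedOrder w fun d hd => by
    rw [map_sum]
    exact Finset.sum_eq_zero fun k hk => coeff_eq_zero_of_lt_weightedOrder w (hd.trans_le (h k hk))

/-- If `z` has order `v < b`, the `k`-th term of the equation has order at least
`b k + v (N - k) > v N`, which is the order of `z ^ N`. -/
theorem nat_le_weightedOrder_of_pow_add_sum_eq_zero [CommRing R] [IsDomain R]
    {z : MvPowerSeries σ R} {c : ℕ → MvPowerSeries σ R} {N b : ℕ}
    (hc : ∀ k ∈ Finset.Icc 1 N, ((b * k : ℕ) : ℕ∞) ≤ (c k).weightedOrder w)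
    (h : z ^ N + ∑ k ∈ Finset.Icc 1 N, c k * z ^ (N - k) = 0) :
    (b : ℕ∞) ≤ z.weightedOrder w := by
  by_contra! hlt
  obtain ⟨v, hv⟩ := ENat.ne_top_iff_exists.1 (ne_top_of_lt hlt)
  rw [← hv, Nat.cast_lt] at hlt
  have hsum :
      ((N * v + 1 : ℕ) : ℕ∞) ≤ (∑ k ∈ Finset.Icc 1 N, c k * z ^ (N - k)).weightedOrder w := by
    refine le_weightedOrder_sum w fun k hk => ?_
    obtain ⟨hk1, hkN⟩ := Finset.mem_Icc.1 hk
    rw [weightedOrder_mul, weightedOrder_pow, ← hv]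
    refine le_trans ?_ (add_le_add (hc k hk) le_rfl)
    rw [nsmul_eq_mul, ← Nat.cast_mul, ← Nat.cast_add, Nat.cast_le]
    have : N * v = k * v + (N - k) * v := by rw [← add_mul, Nat.add_sub_cancel' hkN]
    nlinarith
  have hpow : (z ^ N).weightedOrder w = ((N * v : ℕ) : ℕ∞) := by
    rw [weightedOrder_pow, ← hv, nsmul_eq_mul, Nat.cast_mul]
  rw [← neg_eq_of_add_eq_zero_right h, weightedOrder_neg, hpow, Nat.cast_le] at hsum
  omega

end MvPowerSeries

namespace MvPolynomial

variable {σ R : Type*}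

theorem support_mul_monomial_one [CommSemiring R] (p : MvPolynomial σ R) (s : σ →₀ ℕ) :
    (p * monomial s 1).support = p.support.map (addRightEmbedding s) :=
  AddMonoidAlgebra.support_coeff_mul_single p _ (by simp) _

theorem nat_le_weightedOrder_coe_iff [CommSemiring R] {w : σ → ℕ} {b : ℕ} {f : MvPolynomial σ R} :
    (b : ℕ∞) ≤ (f : MvPowerSeries σ R).weightedOrder w ↔
      ∀ μ ∈ f.support, b ≤ Finsupp.weight w μ := by
  refine ⟨fun h μ hμ => ?_, fun h => MvPowerSeries.nat_le_weightedOrder w fun μ hμ => ?_⟩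
  · exact_mod_cast h.trans
      (MvPowerSeries.weightedOrder_le w (by rwa [coeff_coe, ← mem_support_iff]))
  · rw [coeff_coe, ← notMem_support_iff]
    exact fun hμf => (h μ hμf).not_gt hμ

variable {i j : σ}

section CommSemiring

variable [CommSemiring R]

theorem mem_span_X_pow_pair_pow_iff (hij : i ≠ j) {a n : ℕ} {f : MvPolynomial σ R} :
    f ∈ span {X i ^ a, X j ^ a} ^ n ↔
      ∀ μ ∈ f.support, ∃ s t, s + t = n ∧ a * s ≤ μ i ∧ a * t ≤ μ j := by
  have hmon (s t : ℕ) : (X i ^ a) ^ s * (X j ^ a) ^ t =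
      monomial (Finsupp.single i (a * s) + Finsupp.single j (a * t)) (1 : R) := by
    rw [← pow_mul, ← pow_mul, X_pow_eq_monomial, X_pow_eq_monomial, monomial_mul, mul_one]
  have hgen : {z : MvPolynomial σ R | ∃ s t, s + t = n ∧ z = (X i ^ a) ^ s * (X j ^ a) ^ t} =
      (fun μ => monomial μ 1) ''
        {μ | ∃ s t, s + t = n ∧ μ = Finsupp.single i (a * s) + Finsupp.single j (a * t)} := by
    ext z
    constructor
    · rintro ⟨s, t, hst, rfl⟩
      exact ⟨_, ⟨s, t, hst, rfl⟩, (hmon s t).symm⟩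
    · rintro ⟨_, ⟨s, t, hst, rfl⟩, rfl⟩
      exact ⟨s, t, hst, (hmon s t).symm⟩
  rw [span_pair_pow, hgen, mem_ideal_span_monomial_image]
  refine forall₂_congr fun μ _ => ⟨?_, ?_⟩
  · rintro ⟨_, ⟨s, t, hst, rfl⟩, hle⟩
    exact ⟨s, t, hst, (Finsupp.single_add_single_le_iff hij).1 hle⟩
  · rintro ⟨s, t, hst, hle⟩
    exact ⟨_, ⟨s, t, hst, rfl⟩, (Finsupp.single_add_single_le_iff hij).2 hle⟩

theorem mem_span_X_pair_pow_iff (hij : i ≠ j) {b : ℕ} {f : MvPolynomial σ R} :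
    f ∈ span {X i, X j} ^ b ↔ ∀ μ ∈ f.support, b ≤ μ i + μ j := by
  simpa only [pow_one, one_mul] using
    (mem_span_X_pow_pair_pow_iff (R := R) hij (a := 1) (n := b) (f := f)).trans <|
      forall₂_congr fun μ _ => ⟨fun ⟨s, t, hst, hs, ht⟩ => by omega,
        fun h => ⟨min (μ i) b, b - min (μ i) b, by omega, by omega, by omega⟩⟩

theorem mem_span_X_pair_pow_iff_le_weightedOrder [DecidableEq σ] (hij : i ≠ j) {b : ℕ}
    {f : MvPolynomial σ R} :
    f ∈ span {X i, X j} ^ b ↔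
      (b : ℕ∞) ≤ (f : MvPowerSeries σ R).weightedOrder (Pi.single i 1 + Pi.single j 1) := by
  simp only [mem_span_X_pair_pow_iff hij, nat_le_weightedOrder_coe_iff,
    Finsupp.weight_piSingle_add_piSingle]

theorem colon_span_X_pow_pair_pow (hij : i ≠ j) {a n : ℕ} (ha : 0 < a) (hn : 0 < n) :
    Submodule.colon (span {X i ^ a, X j ^ a} ^ n : Ideal (MvPolynomial σ R))
        (span {monomial (Finsupp.single i (a - 1) + Finsupp.single j (n * a - 1)) (1 : R)}) =
      span {X i, X j} := by
  ext g
  rw [mem_colon_span_singleton, mem_span_X_pow_pair_pow_iff hij, ← pow_one (span {X i, X j}),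
    mem_span_X_pair_pow_iff hij, support_mul_monomial_one, Finset.forall_mem_map]
  refine forall₂_congr fun μ _ => ?_
  simp only [addRightEmbedding_apply, Finsupp.add_apply, Finsupp.single_eq_same,
    Finsupp.single_eq_of_ne hij, Finsupp.single_eq_of_ne hij.symm, add_zero, zero_add]
  have hna : n * a = a * (n - 1) + a := by
    rw [← Nat.mul_succ, Nat.succ_eq_add_one, Nat.sub_add_cancel hn, mul_comm]
  constructor
  · rintro ⟨s, t, hst, hs, ht⟩
    rcases s with _ | s
    · rw [zero_add] at hst
      subst hst
      rw [mul_comm] at ht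
      omega
    · have : a ≤ a * (s + 1) := Nat.le_mul_of_pos_right a s.succ_pos
      omega
  · intro h
    by_cases hi : 1 ≤ μ i
    · exact ⟨1, n - 1, by omega, by omega, by omega⟩
    · exact ⟨0, n, by omega, by omega, by rw [mul_comm]; omega⟩

theorem le_degree_of_isPrime_colon_span_X_pow_pair_pow (hij : i ≠ j) {a n d : ℕ}
    {f : MvPolynomial σ R} (hf : f.IsHomogeneous d)
    (hp : (Submodule.colon (span {X i ^ a, X j ^ a} ^ n : Ideal (MvPolynomial σ R))
      (span {f})).IsPrime) :
    (n + 1) * a - 2 ≤ d := by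
  have hpow (k : σ) (hk : k = i ∨ k = j) :
      (X k : MvPolynomial σ R) ^ (a * n) ∈ span {X i ^ a, X j ^ a} ^ n := by
    rw [pow_mul]
    exact pow_mem_pow (subset_span (by rcases hk with rfl | rfl <;> simp)) n
  obtain ⟨μ, hμ, hμJ⟩ : ∃ μ ∈ f.support, ∀ s t, s + t = n → a * s ≤ μ i → μ j < a * t := by
    simpa [mem_span_X_pow_pair_pow_iff hij] using notMem_of_isPrime_colon hp
  have hXmem (k : σ) (hk : k = i ∨ k = j) :=
    (mem_span_X_pow_pair_pow_iff hij).1 (mul_mem_of_isPrime_colon_of_pow_mem hp (hpow k hk))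
      (Finsupp.single k 1 + μ) (by rw [support_X_mul]; exact Finset.mem_map_of_mem _ hμ)
  obtain ⟨s, t, hst, hs, ht⟩ := hXmem i (Or.inl rfl)
  obtain ⟨s', t', hst', hs', ht'⟩ := hXmem j (Or.inr rfl)
  simp only [Finsupp.add_apply, Finsupp.single_eq_same, Finsupp.single_eq_of_ne hij,
    Finsupp.single_eq_of_ne hij.symm, zero_add] at hs ht hs' ht'
  have has : a * s = 1 + μ i := by
    have := hμJ s t hst
    omega
  have hat' : a * t' = 1 + μ j := by
    have := hμJ s' t' hst'
    omega
  have htt' : t < t' := Nat.lt_of_mul_lt_mul_left (a := a) (by omega)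
  have hsum : (n + 1) * a ≤ μ i + μ j + 2 := by
    calc (n + 1) * a ≤ (s + t') * a := Nat.mul_le_mul_right a (by omega)
      _ = μ i + μ j + 2 := by rw [add_mul, mul_comm s, mul_comm t', has, hat']; ring
  have hdeg : μ.degree = d := by
    rw [Finsupp.degree_eq_weight_one]
    exact hf (mem_support_iff.1 hμ)
  have := Finsupp.apply_add_apply_le_degree hij μ
  omega

end CommSemiring

section IsDomain

variable [CommRing R] [IsDomain R]

theorem isPrime_span_X_pair (hij : i ≠ j) :
    (span {X i, X j} : Ideal (MvPolynomial σ R)).IsPrime := by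
  classical
  have hmem (f : MvPolynomial σ R) : f ∈ span {X i, X j} ↔
      1 ≤ (f : MvPowerSeries σ R).weightedOrder (Pi.single i 1 + Pi.single j 1) := by
    simpa using mem_span_X_pair_pow_iff_le_weightedOrder (f := f) (b := 1) hij
  refine isPrime_iff.2 ⟨(ne_top_iff_one _).2 ?_, fun {f g} hfg => ?_⟩
  · simp [hmem]
  · simp only [hmem, coe_mul, MvPowerSeries.weightedOrder_mul, Order.one_le_iff_ne_zero, ne_eq,
      add_eq_zero, not_and_or] at hfg ⊢
    exact hfg

theorem intClosure_le_span_X_pair_pow (hij : i ≠ j) {b : ℕ} {J : Ideal (MvPolynomial σ R)}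
    (hJ : J ≤ span {X i, X j} ^ b) :
    intClosure J ≤ span {X i, X j} ^ b := by
  classical
  rw [intClosure, span_le]
  rintro z ⟨N, -, c, hc, hz⟩
  rw [SetLike.mem_coe, mem_span_X_pair_pow_iff_le_weightedOrder hij]
  refine MvPowerSeries.nat_le_weightedOrder_of_pow_add_sum_eq_zero _ (c := fun k => c k)
    (fun k hk => ?_) (by simpa only [map_add, map_pow, map_sum, map_mul, map_zero,
      coeToMvPowerSeries.ringHom_apply] using congrArg coeToMvPowerSeries.ringHom hz)
  rw [← mem_span_X_pair_pow_iff_le_weightedOrder hij, pow_mul]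
  exact pow_right_mono hJ k (hc k hk)

theorem intClosure_span_X_pow_pair_pow (hij : i ≠ j) {a : ℕ} (ha : 0 < a) (n : ℕ) :
    intClosure (span {X i ^ a, X j ^ a} ^ n : Ideal (MvPolynomial σ R)) =
      span {X i, X j} ^ (n * a) := by
  refine le_antisymm (intClosure_le_span_X_pair_pow hij ?_) ?_
  · rw [mul_comm, pow_mul]
    refine pow_right_mono (span_le.2 ?_) n
    rintro _ (rfl | rfl) <;> exact pow_mem_pow (subset_span (by simp)) a
  · rw [span_pair_pow, span_le]
    rintro _ ⟨s, t, hst, rfl⟩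
    refine mem_intClosure_of_pow_mem_pow ha ?_
    rw [show (X i ^ s * X j ^ t) ^ a = (X i ^ a) ^ s * (X j ^ a) ^ t by ring, ← pow_mul, ← hst,
      pow_add]
    exact mul_mem_mul (pow_mem_pow (subset_span (by simp)) s)
      (pow_mem_pow (subset_span (by simp)) t)

end IsDomain

theorem vnumber_span_X_pow_pair_pow {K : Type*} [Field K] (hij : i ≠ j) {a n : ℕ} (ha : 0 < a)
    (hn : 0 < n) :
    vnumber (span {X i ^ a, X j ^ a} ^ n : Ideal (MvPolynomial σ K)) = (n + 1) * a - 2 := by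
  have hna : 0 < n * a := Nat.mul_pos hn ha
  refine vnumber_eq_of_isPrime_colon (isHomogeneous_monomial 1 ?_)
    (by rw [colon_span_X_pow_pair_pow hij ha hn]; exact isPrime_span_X_pair hij)
    fun _ _ hg hp => le_degree_of_isPrime_colon_span_X_pow_pair_pow hij hg hp
  rw [map_add, Finsupp.degree_single, Finsupp.degree_single, add_mul, one_mul]
  omega

end MvPolynomial

theorem vnumber_pow_sub_vnumber_intClosure_eq_general
    {K : Type*} [Field K] (m : ℕ) (q : ℕ)
    (i j : Fin m) (hij : i ≠ j)
    (I : Ideal (MvPolynomial (Fin m) K))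
    (hI : I = Ideal.span {(X i : MvPolynomial (Fin m) K) ^ (q + 1), (X j) ^ (q + 1)})
    (n : ℕ) (hn : 1 ≤ n) :
    (vnumber (I ^ n) : ℤ) - (vnumber (intClosure (I ^ n)) : ℤ) = q := by
  subst hI
  have ha : 0 < q + 1 := q.succ_pos
  have hb : 0 < n * (q + 1) := by positivity
  have hclosure := vnumber_span_X_pow_pair_pow (K := K) hij one_pos hb
  rw [pow_one, pow_one] at hclosure
  rw [intClosure_span_X_pow_pair_pow hij ha, hclosure, vnumber_span_X_pow_pair_pow hij ha hn]
  have : (n + 1) * (q + 1) = n * (q + 1) + q + 1 := by ring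
  omega

/-- For any `q ≥ 1`, the equigenerated complete intersection `I = ⟨x_i^{q+1}, x_j^{q+1}⟩`
(with `i ≠ j`, in `K[x_1,…,x_m]`, `m ≥ 2`) satisfies `v(I^n) − v(closure(I^n)) = q`
for all `n ≥ 1`. -/
theorem vnumber_pow_sub_vnumber_intClosure_eq
    {K : Type*} [Field K] (m : ℕ) (hm : 2 ≤ m) (q : ℕ) (hq : 1 ≤ q)
    (i j : Fin m) (hij : i ≠ j)
    (I : Ideal (MvPolynomial (Fin m) K))
    (hI : I = Ideal.span {(X i : MvPolynomial (Fin m) K) ^ (q + 1), (X j) ^ (q + 1)})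
    (n : ℕ) (hn : 1 ≤ n) :
    (vnumber (I ^ n) : ℤ) - (vnumber (intClosure (I ^ n)) : ℤ) = q :=
  vnumber_pow_sub_vnumber_intClosure_eq_general m q i j hij I hI n hn
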